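/- arXiv:1602.08721 — 7 statements merged into one kernel-verified Lean document; each statement's English description precedes it below -/
import Mathlib

section
/- Let V = X ∪ α ∪ Y be a partition of the variable set into three pairwise disjoint sets, and suppose every constraint scope e in C satisfies e ⊆ X ∪ α or e ⊆ α ∪ Y. Then the set S of all solutions of C satisfies the multivalued dependency α ↠ X: for all f, g ∈ S with f|α = g|α, there exists h ∈ S such that h agrees with f on X ∪ α and agrees with g on Y. -/
open scoped Classical

/-- A constraint over variables `V` and values `A`: a scope `e ⊆ V` together with a
set of functions from `e` to `A`. -/
structure Constraint (V A : Type) where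
  scope : Finset V
  rel : Set ({x // x ∈ scope} → A)

/-- Restriction of a function defined on `t` to a subset `s ⊆ t`. -/
def restrict {V A : Type} {s t : Finset V} (h : s ⊆ t) (g : {x // x ∈ t} → A) :
    {x // x ∈ s} → A :=
  fun x => g ⟨x.1, h x.2⟩

/-- Restriction of a total function `f : V → A` to a subset `s ⊆ V`. -/
def restrictF {V A : Type} (f : V → A) (s : Finset V) : {x // x ∈ s} → A :=
  fun x => f x.1

/-- `f` is a solution of the family of constraints `C`: for every constraint,
the restriction of `f` to its scope belongs to its relation. -/
def IsSolution {V A ι : Type} (C : ι → Constraint V A) (f : V → A) : Prop :=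
  ∀ i, restrictF f (C i).scope ∈ (C i).rel


/-- under the partition and scope conditions, the set `S` of all solutions
of `C` satisfies the multivalued dependency `α ↠ X`: for all `f, g ∈ S` agreeing on `α`
there is `h ∈ S` agreeing with `f` on `X ∪ α` and with `g` on `Y`. -/
theorem stmt1 {V A ι : Type} [Fintype V] [DecidableEq V] [Fintype A] [Fintype ι]
    (C : ι → Constraint V A)
    (X α Y : Finset V)
    (hXα : Disjoint X α) (hXY : Disjoint X Y) (hαY : Disjoint α Y)
    (hcover : X ∪ α ∪ Y = Finset.univ)
    (hscope : ∀ i, (C i).scope ⊆ X ∪ α ∨ (C i).scope ⊆ α ∪ Y)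
    (S : Set (V → A)) (hS : S = {f | IsSolution C f}) :
    ∀ f ∈ S, ∀ g ∈ S, restrictF f α = restrictF g α →
      ∃ h ∈ S, (∀ x ∈ X ∪ α, h x = f x) ∧ (∀ x ∈ Y, h x = g x) := by
  subst hS
  intro f hf g hg hagree
  have hagree' : ∀ x ∈ α, f x = g x := by
    intro x hx
    exact congrFun hagree ⟨x, hx⟩
  refine ⟨fun x => if x ∈ X ∪ α then f x else g x, ?_, ?_, ?_⟩
  · intro i
    rcases hscope i with hsc | hsc
    · have : restrictF (fun x => if x ∈ X ∪ α then f x else g x) (C i).scope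
          = restrictF f (C i).scope := by
        funext x
        simp [restrictF, hsc x.2]
      rw [this]; exact hf i
    · have : restrictF (fun x => if x ∈ X ∪ α then f x else g x) (C i).scope
          = restrictF g (C i).scope := by
        funext x
        rcases Finset.mem_union.1 (hsc x.2) with hx | hx
        · simp [restrictF, Finset.mem_union, hx, hagree' x.1 hx]
        · have hxX : x.1 ∉ X := fun hh => (hXY.forall_ne_finset hh hx) rfl
          have hxα : x.1 ∉ α := fun hh => (hαY.forall_ne_finset hh hx) rfl
          simp [restrictF, Finset.mem_union, hxX, hxα]
      rw [this]; exact hg i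
  · intro x hx; simp [hx]
  · intro x hx
    have hxX : x ∉ X := fun hh => (hXY.forall_ne_finset hh hx) rfl
    have hxα : x ∉ α := fun hh => (hαY.forall_ne_finset hh hx) rfl
    simp [Finset.mem_union, hxX, hxα]
end

section
/- Let V = X ∪ α ∪ Y be a partition of the variable set into three pairwise disjoint sets, and suppose every constraint scope e in C satisfies e ⊆ X ∪ α or e ⊆ α ∪ Y. For a function τ : α → A, let N_X(τ) be the number of functions g : X ∪ α → A with g|α = τ that satisfy every constraint of C whose scope is contained in X ∪ α, and let N_Y(τ) be the number of functions g : α ∪ Y → A with g|α = τ that satisfy every constraint of C whose scope is contained in α ∪ Y. Then for every τ : α → A, the number of solutions f of C with f|α = τ equals N_X(τ) · N_Y(τ). -/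
open scoped Classical

/-- `g`, a partial assignment on `s`, satisfies every constraint of `C` whose scope
is contained in `s`. -/
def SatisfiesOn {V A ι : Type} (C : ι → Constraint V A) {s : Finset V}
    (g : {x // x ∈ s} → A) : Prop :=
  ∀ i, ∀ h : (C i).scope ⊆ s, restrict h g ∈ (C i).rel

/-- for every `τ : α → A`, the number of solutions `f` of `C` with
`f|α = τ` equals `N_X(τ) · N_Y(τ)`. -/
theorem stmt2 {V A ι : Type} [Fintype V] [DecidableEq V] [Fintype A] [Fintype ι]
    (C : ι → Constraint V A)
    (X α Y : Finset V)
    (hXα : Disjoint X α) (hXY : Disjoint X Y) (hαY : Disjoint α Y)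
    (hcover : X ∪ α ∪ Y = Finset.univ)
    (hscope : ∀ i, (C i).scope ⊆ X ∪ α ∨ (C i).scope ⊆ α ∪ Y)
    (τ : {x // x ∈ α} → A) :
    Nat.card {f : V → A // IsSolution C f ∧ restrictF f α = τ} =
      Nat.card {g : {x // x ∈ X ∪ α} → A //
          restrict Finset.subset_union_right g = τ ∧ SatisfiesOn C g} *
      Nat.card {g : {x // x ∈ α ∪ Y} → A //
          restrict Finset.subset_union_left g = τ ∧ SatisfiesOn C g} := by
  classical
  rw [← Nat.card_prod]
  refine Nat.card_congr ?_
  have hmemY : ∀ v : V, v ∉ X ∪ α → v ∈ α ∪ Y := by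
    intro v hv
    have hu : v ∈ X ∪ α ∪ Y := by rw [hcover]; exact Finset.mem_univ v
    simp only [Finset.mem_union] at hu hv ⊢
    tauto
  have hαsub : ∀ v : V, v ∈ α ∪ Y → v ∈ X ∪ α → v ∈ α := by
    intro v h1 h2
    simp only [Finset.mem_union] at h1 h2
    rcases h2 with h2 | h2
    · rcases h1 with h1 | h1
      · exact absurd h1 (Finset.disjoint_left.mp hXα h2)
      · exact absurd h1 (Finset.disjoint_left.mp hXY h2)
    · exact h2
  refine
    { toFun := fun f =>
        (⟨restrictF f.1 (X ∪ α), ?_, ?_⟩, ⟨restrictF f.1 (α ∪ Y), ?_, ?_⟩)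
      invFun := fun gg =>
        ⟨fun v => if h : v ∈ X ∪ α then gg.1.1 ⟨v, h⟩ else gg.2.1 ⟨v, hmemY v h⟩, ?_, ?_⟩
      left_inv := ?_
      right_inv := ?_ }
  · exact f.2.2
  · intro i h
    have : restrict h (restrictF f.1 (X ∪ α)) = restrictF f.1 (C i).scope := rfl
    rw [this]; exact f.2.1 i
  · exact f.2.2
  · intro i h
    have : restrict h (restrictF f.1 (α ∪ Y)) = restrictF f.1 (C i).scope := rfl
    rw [this]; exact f.2.1 i
  · -- IsSolution of glued function
    intro i
    rcases hscope i with h | h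
    · have heq : restrictF (fun v => if hv : v ∈ X ∪ α then gg.1.1 ⟨v, hv⟩
          else gg.2.1 ⟨v, hmemY v hv⟩) (C i).scope = restrict h gg.1.1 := by
        funext x
        simp only [restrictF, restrict, dif_pos (h x.2)]
      rw [heq]; exact gg.1.2.2 i h
    · have heq : restrictF (fun v => if hv : v ∈ X ∪ α then gg.1.1 ⟨v, hv⟩
          else gg.2.1 ⟨v, hmemY v hv⟩) (C i).scope = restrict h gg.2.1 := by
        funext x
        simp only [restrictF, restrict]
        by_cases hx : x.1 ∈ X ∪ α
        · rw [dif_pos hx]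
          have hxα : x.1 ∈ α := hαsub x.1 (h x.2) hx
          have e1 : gg.1.1 ⟨x.1, hx⟩ = τ ⟨x.1, hxα⟩ := by
            have := congrFun gg.1.2.1 ⟨x.1, hxα⟩
            simpa [restrict] using this
          have e2 : gg.2.1 ⟨x.1, h x.2⟩ = τ ⟨x.1, hxα⟩ := by
            have := congrFun gg.2.2.1 ⟨x.1, hxα⟩
            simpa [restrict] using this
          rw [e1, ← e2]
        · rw [dif_neg hx]
      rw [heq]; exact gg.2.2.2 i h
  · -- restrictF to α is τ
    funext x
    have hx : x.1 ∈ X ∪ α := Finset.mem_union_right _ x.2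
    simp only [restrictF, dif_pos hx]
    have := congrFun gg.1.2.1 ⟨x.1, x.2⟩
    simpa [restrict] using this
  · -- left inverse
    intro f
    apply Subtype.ext
    funext v
    by_cases hv : v ∈ X ∪ α <;> simp [restrictF, hv]
  · -- right inverse
    intro gg
    refine Prod.ext (Subtype.ext ?_) (Subtype.ext ?_)
    · funext x
      simp only [restrictF, dif_pos x.2]
    · funext x
      simp only [restrictF]
      by_cases hx : x.1 ∈ X ∪ α
      · rw [dif_pos hx]
        have hxα : x.1 ∈ α := hαsub x.1 x.2 hx
        have e1 : gg.1.1 ⟨x.1, hx⟩ = τ ⟨x.1, hxα⟩ := by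
          have := congrFun gg.1.2.1 ⟨x.1, hxα⟩
          simpa [restrict] using this
        have e2 : gg.2.1 x = τ ⟨x.1, hxα⟩ := by
          have := congrFun gg.2.2.1 ⟨x.1, hxα⟩
          simpa [restrict] using this
        rw [e1, ← e2]
      · rw [dif_neg hx]
end

section
/- Let V = X ∪ α ∪ Y be a partition of the variable set into three pairwise disjoint sets, and suppose every constraint scope e in C satisfies e ⊆ X ∪ α or e ⊆ α ∪ Y. For a function τ : α → A, let N_X(τ) be the number of functions g : X ∪ α → A with g|α = τ that satisfy every constraint of C whose scope is contained in X ∪ α, and let N_Y(τ) be the number of functions g : α ∪ Y → A with g|α = τ that satisfy every constraint of C whose scope is contained in α ∪ Y. Then the total number of solutions of C equals the sum, over all functions τ : α → A, of N_X(τ) · N_Y(τ). -/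
open scoped Classical

section Aux

variable {V A ι : Type} [Fintype V] [DecidableEq V]

/-- Glue two partial assignments along the cover. -/
noncomputable def glue {X α Y : Finset V} (hcover : X ∪ α ∪ Y = Finset.univ)
    (gX : {x // x ∈ X ∪ α} → A) (gY : {x // x ∈ α ∪ Y} → A) : V → A :=
  fun v => if hv : v ∈ X ∪ α then gX ⟨v, hv⟩ else
    gY ⟨v, by
      have hu : v ∈ X ∪ α ∪ Y := by rw [hcover]; exact Finset.mem_univ v
      rcases Finset.mem_union.1 hu with h | h
      · exact absurd h hv
      · exact Finset.mem_union_right _ h⟩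

lemma glue_eqX {X α Y : Finset V} (hcover : X ∪ α ∪ Y = Finset.univ)
    (gX : {x // x ∈ X ∪ α} → A) (gY : {x // x ∈ α ∪ Y} → A)
    (v : V) (hv : v ∈ X ∪ α) : glue hcover gX gY v = gX ⟨v, hv⟩ :=
  dif_pos hv

lemma glue_eqY {X α Y : Finset V} (hXα : Disjoint X α) (hXY : Disjoint X Y)
    (hcover : X ∪ α ∪ Y = Finset.univ) {τ : {x // x ∈ α} → A}
    (gX : {x // x ∈ X ∪ α} → A) (gY : {x // x ∈ α ∪ Y} → A)
    (hgX : restrict Finset.subset_union_right gX = τ)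
    (hgY : restrict Finset.subset_union_left gY = τ)
    (v : V) (hv : v ∈ α ∪ Y) : glue hcover gX gY v = gY ⟨v, hv⟩ := by
  by_cases h : v ∈ X ∪ α
  · have hvα : v ∈ α := by
      rcases Finset.mem_union.1 hv with h1 | h1
      · exact h1
      rcases Finset.mem_union.1 h with h2 | h2
      · exact absurd h1 (Finset.disjoint_left.1 hXY h2)
      · exact h2
    have e1 : gX ⟨v, h⟩ = τ ⟨v, hvα⟩ := congrFun hgX ⟨v, hvα⟩
    have e2 : gY ⟨v, hv⟩ = τ ⟨v, hvα⟩ := congrFun hgY ⟨v, hvα⟩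
    rw [glue_eqX hcover gX gY v h, e1, e2]
  · exact dif_neg h

/-- The fiber over `τ` of the restriction map is equivalent to the product. -/
noncomputable def fiberEquiv (C : ι → Constraint V A)
    (X α Y : Finset V)
    (hXα : Disjoint X α) (hXY : Disjoint X Y) (hαY : Disjoint α Y)
    (hcover : X ∪ α ∪ Y = Finset.univ)
    (hscope : ∀ i, (C i).scope ⊆ X ∪ α ∨ (C i).scope ⊆ α ∪ Y)
    (τ : {x // x ∈ α} → A) :
    {f : {f : V → A // IsSolution C f} // restrictF f.1 α = τ} ≃
      {g : {x // x ∈ X ∪ α} → A //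
          restrict Finset.subset_union_right g = τ ∧ SatisfiesOn C g} ×
      {g : {x // x ∈ α ∪ Y} → A //
          restrict Finset.subset_union_left g = τ ∧ SatisfiesOn C g} where
  toFun f :=
    (⟨restrictF f.1.1 (X ∪ α), f.2, fun i h => f.1.2 i⟩,
     ⟨restrictF f.1.1 (α ∪ Y), f.2, fun i h => f.1.2 i⟩)
  invFun g := by
    refine ⟨⟨glue hcover g.1.1 g.2.1, ?_⟩, ?_⟩
    · intro i
      rcases hscope i with h | h
      · have key : restrictF (glue hcover g.1.1 g.2.1) (C i).scope = restrict h g.1.1 :=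
          funext fun x => glue_eqX hcover g.1.1 g.2.1 x.1 (h x.2)
        rw [key]; exact g.1.2.2 i h
      · have key : restrictF (glue hcover g.1.1 g.2.1) (C i).scope = restrict h g.2.1 :=
          funext fun x => glue_eqY hXα hXY hcover g.1.1 g.2.1 g.1.2.1 g.2.2.1 x.1 (h x.2)
        rw [key]; exact g.2.2.2 i h
    · funext x
      have : glue hcover g.1.1 g.2.1 x.1 = g.1.1 ⟨x.1, Finset.mem_union_right _ x.2⟩ :=
        glue_eqX hcover g.1.1 g.2.1 x.1 (Finset.mem_union_right _ x.2)
      rw [show restrictF (glue hcover g.1.1 g.2.1) α x = glue hcover g.1.1 g.2.1 x.1 from rfl,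
        this]
      exact congrFun g.1.2.1 x
  left_inv f := by
    apply Subtype.ext; apply Subtype.ext; funext v
    show glue hcover _ _ v = f.1.1 v
    unfold glue
    split <;> rfl
  right_inv g := by
    refine Prod.ext (Subtype.ext (funext fun x => ?_)) (Subtype.ext (funext fun x => ?_))
    · exact glue_eqX hcover g.1.1 g.2.1 x.1 x.2
    · exact glue_eqY hXα hXY hcover g.1.1 g.2.1 g.1.2.1 g.2.2.1 x.1 x.2

end Aux

/-- the total number of solutions of `C` equals the sum over all
`τ : α → A` of `N_X(τ) · N_Y(τ)`. -/
theorem stmt3 {V A ι : Type} [Fintype V] [DecidableEq V] [Fintype A] [Fintype ι]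
    (C : ι → Constraint V A)
    (X α Y : Finset V)
    (hXα : Disjoint X α) (hXY : Disjoint X Y) (hαY : Disjoint α Y)
    (hcover : X ∪ α ∪ Y = Finset.univ)
    (hscope : ∀ i, (C i).scope ⊆ X ∪ α ∨ (C i).scope ⊆ α ∪ Y) :
    Nat.card {f : V → A // IsSolution C f} =
      ∑ τ : {x // x ∈ α} → A,
        Nat.card {g : {x // x ∈ X ∪ α} → A //
            restrict Finset.subset_union_right g = τ ∧ SatisfiesOn C g} *
        Nat.card {g : {x // x ∈ α ∪ Y} → A //
            restrict Finset.subset_union_left g = τ ∧ SatisfiesOn C g} := by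
  classical
  have e : {f : V → A // IsSolution C f} ≃
      Σ τ : {x // x ∈ α} → A,
        {g : {x // x ∈ X ∪ α} → A //
            restrict Finset.subset_union_right g = τ ∧ SatisfiesOn C g} ×
        {g : {x // x ∈ α ∪ Y} → A //
            restrict Finset.subset_union_left g = τ ∧ SatisfiesOn C g} :=
    (Equiv.sigmaFiberEquiv fun f : {f : V → A // IsSolution C f} => restrictF f.1 α).symm.trans
      (Equiv.sigmaCongrRight (fiberEquiv C X α Y hXα hXY hαY hcover hscope))
  rw [Nat.card_congr e]
  rw [Nat.card_eq_fintype_card, Fintype.card_sigma]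
  exact Finset.sum_congr rfl fun τ _ => by
    rw [Fintype.card_prod, Nat.card_eq_fintype_card, Nat.card_eq_fintype_card]
end

section
/- Let V = X ∪ α ∪ Y be a partition of the variable set into three pairwise disjoint sets, and suppose every constraint scope e in C satisfies e ⊆ X ∪ α or e ⊆ α ∪ Y. For a function τ : α → A, let N_X(τ) be the number of functions g : X ∪ α → A with g|α = τ that satisfy every constraint of C whose scope is contained in X ∪ α. If μ : α ∪ Y → A satisfies every constraint of C whose scope is contained in α ∪ Y, then the number of solutions f of C whose restriction to α ∪ Y equals μ is exactly N_X(μ|α). In particular, this number depends on μ only through its restriction to α. -/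
open scoped Classical

/-- if `μ : α ∪ Y → A` satisfies every constraint whose scope is contained
in `α ∪ Y`, then the number of solutions `f` of `C` with `f|_{α∪Y} = μ` is exactly
`N_X(μ|α)`; in particular it depends on `μ` only through `μ|α`. -/
theorem stmt4 {V A ι : Type} [Fintype V] [DecidableEq V] [Fintype A] [Fintype ι]
    (C : ι → Constraint V A)
    (X α Y : Finset V)
    (hXα : Disjoint X α) (hXY : Disjoint X Y) (hαY : Disjoint α Y)
    (hcover : X ∪ α ∪ Y = Finset.univ)
    (hscope : ∀ i, (C i).scope ⊆ X ∪ α ∨ (C i).scope ⊆ α ∪ Y)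
    (μ : {x // x ∈ α ∪ Y} → A) (hμ : SatisfiesOn C μ) :
    Nat.card {f : V → A // IsSolution C f ∧ restrictF f (α ∪ Y) = μ} =
      Nat.card {g : {x // x ∈ X ∪ α} → A //
          restrict Finset.subset_union_right g = restrict Finset.subset_union_left μ ∧
          SatisfiesOn C g} := by

  apply Nat.card_congr
  refine Equiv.ofBijective (fun f => ⟨restrictF f.1 (X ∪ α), ?_, ?_⟩) ⟨?_, ?_⟩
  · funext x
    have hx : x.1 ∈ α ∪ Y := Finset.mem_union_left _ x.2
    have := congrFun f.2.2 ⟨x.1, hx⟩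
    exact this
  · intro i h
    have := f.2.1 i
    exact this
  · rintro ⟨f, hf⟩ ⟨f', hf'⟩ h
    have h1 : restrictF f (X ∪ α) = restrictF f' (X ∪ α) := congrArg Subtype.val h
    ext x
    have hx : x ∈ X ∪ α ∪ Y := hcover ▸ Finset.mem_univ x
    rcases Finset.mem_union.1 hx with hx | hx
    · exact congrFun h1 ⟨x, hx⟩
    · have hx' : x ∈ α ∪ Y := Finset.mem_union_right _ hx
      have := congrFun hf.2 ⟨x, hx'⟩
      have := congrFun hf'.2 ⟨x, hx'⟩
      calc f x = μ ⟨x, hx'⟩ := congrFun hf.2 ⟨x, hx'⟩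
        _ = f' x := (congrFun hf'.2 ⟨x, hx'⟩).symm
  · rintro ⟨g, hgμ, hg⟩
    set f : V → A := fun x => if hx : x ∈ X ∪ α then g ⟨x, hx⟩ else
      μ ⟨x, by
        have hx' : x ∈ X ∪ α ∪ Y := hcover ▸ Finset.mem_univ x
        rcases Finset.mem_union.1 hx' with h' | h'
        · exact absurd h' hx
        · exact Finset.mem_union_right _ h'⟩ with hfdef
    have key : ∀ x (hx : x ∈ α ∪ Y), f x = μ ⟨x, hx⟩ := by
      intro x hx
      by_cases hxa : x ∈ X ∪ α
      · have hxα : x ∈ α := by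
          rcases Finset.mem_union.1 hxa with h' | h'
          · rcases Finset.mem_union.1 hx with h'' | h''
            · exact absurd h'' (Finset.disjoint_left.1 hXα h')
            · exact absurd h'' (Finset.disjoint_left.1 hXY h')
          · exact h'
        have := congrFun hgμ ⟨x, hxα⟩
        simp only [restrict] at this
        simp only [hfdef, dif_pos hxa]
        exact this
      · simp only [hfdef, dif_neg hxa]
    have keyg : ∀ x (hx : x ∈ X ∪ α), f x = g ⟨x, hx⟩ := fun x hx => dif_pos hx
    have hsol : IsSolution C f := by
      intro i
      rcases hscope i with h | h
      · have : restrictF f (C i).scope = restrict h g := by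
          funext x; exact keyg x.1 (h x.2)
        rw [this]; exact hg i h
      · have : restrictF f (C i).scope = restrict h μ := by
          funext x; exact key x.1 (h x.2)
        rw [this]; exact hμ i h
    refine ⟨⟨f, hsol, ?_⟩, ?_⟩
    · funext x; exact key x.1 x.2
    · apply Subtype.ext
      funext x
      exact keyg x.1 x.2
end

section
/- Let V = B ∪ X_1 ∪ ⋯ ∪ X_k be a partition of the variable set into pairwise disjoint sets, let α_1, …, α_k be subsets of B, and suppose every constraint scope e in C satisfies e ⊆ B or e ⊆ X_i ∪ α_i for some i. For each i and each function σ : α_i → A, let N_i(σ) be the number of functions g : X_i → A such that the combined function equal to g on X_i and to σ on α_i satisfies every constraint of C whose scope is contained in X_i ∪ α_i and meets X_i. Then for every function b : B → A that satisfies every constraint of C whose scope is contained in B, the number of solutions f of C with f|B = b equals the product N_1(b|α_1) · N_2(b|α_2) · ⋯ · N_k(b|α_k). -/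
open scoped Classical

/-- Combine an assignment on `s` with an assignment on `t` into an assignment on
`s ∪ t` (preferring the first on `s`). -/
def combine {V A : Type} [DecidableEq V] {s t : Finset V}
    (g : {x // x ∈ s} → A) (σ : {x // x ∈ t} → A) : {x // x ∈ s ∪ t} → A :=
  fun x =>
    if hx : x.1 ∈ s then g ⟨x.1, hx⟩
    else σ ⟨x.1, by
      rcases Finset.mem_union.mp x.2 with h | h
      · exact absurd h hx
      · exact h⟩

/-- with `V = B ∪ X₁ ∪ ⋯ ∪ X_k` a partition, `αᵢ ⊆ B`, and every scope
contained in `B` or in some `Xᵢ ∪ αᵢ`, for every `b : B → A` satisfying all constraints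
with scope in `B`, the number of solutions extending `b` is `∏ᵢ Nᵢ(b|αᵢ)`. -/
theorem stmt5 {V A ι : Type} [Fintype V] [DecidableEq V] [Fintype A] [Fintype ι]
    (C : ι → Constraint V A) {k : ℕ}
    (B : Finset V) (X : Fin k → Finset V) (α : Fin k → Finset V)
    (hαB : ∀ i, α i ⊆ B)
    (hBX : ∀ i, Disjoint B (X i))
    (hXX : ∀ i j, i ≠ j → Disjoint (X i) (X j))
    (hcover : B ∪ Finset.univ.biUnion X = Finset.univ)
    (hscope : ∀ j, (C j).scope ⊆ B ∨ ∃ i, (C j).scope ⊆ X i ∪ α i)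
    (b : {x // x ∈ B} → A) (hb : SatisfiesOn C b) :
    Nat.card {f : V → A // IsSolution C f ∧ restrictF f B = b} =
      ∏ i : Fin k,
        Nat.card {g : {x // x ∈ X i} → A //
          ∀ j, ∀ h : (C j).scope ⊆ X i ∪ α i, ((C j).scope ∩ X i).Nonempty →
            restrict h (combine g (restrict (hαB i) b)) ∈ (C j).rel} := by

  classical
  have hmem : ∀ v : V, v ∉ B → ∃ i, v ∈ X i := by
    intro v hv
    have hv' : v ∈ B ∪ Finset.univ.biUnion X := by rw [hcover]; exact Finset.mem_univ v
    rcases Finset.mem_union.mp hv' with h | h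
    · exact absurd h hv
    · obtain ⟨i, _, hi⟩ := Finset.mem_biUnion.mp h
      exact ⟨i, hi⟩
  have huniq : ∀ {v : V} {i j : Fin k}, v ∈ X i → v ∈ X j → i = j := by
    intro v i j hi hj
    by_contra hne
    exact Finset.disjoint_left.mp (hXX i j hne) hi hj
  have hnotB : ∀ {v : V} {i : Fin k}, v ∈ X i → v ∉ B := by
    intro v i hv hB
    exact Finset.disjoint_left.mp (hBX i) hB hv
  set G := fun i : Fin k => {g : {x // x ∈ X i} → A //
      ∀ j, ∀ h : (C j).scope ⊆ X i ∪ α i, ((C j).scope ∩ X i).Nonempty →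
        restrict h (combine g (restrict (hαB i) b)) ∈ (C j).rel} with hG
  -- the backward construction
  let F : (∀ i, G i) → V → A := fun g v =>
    if hv : v ∈ B then b ⟨v, hv⟩
    else (g (hmem v hv).choose).1 ⟨v, (hmem v hv).choose_spec⟩
  have hFB : ∀ g (v : V) (hv : v ∈ B), F g v = b ⟨v, hv⟩ := by
    intro g v hv; simp only [F, dif_pos hv]
  have hFX : ∀ g (v : V) (i : Fin k) (hv : v ∈ X i), F g v = (g i).1 ⟨v, hv⟩ := by
    intro g v i hv
    have hvB : v ∉ B := hnotB hv
    simp only [F, dif_neg hvB]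
    have : (hmem v hvB).choose = i := huniq (hmem v hvB).choose_spec hv
    subst this; rfl
  have key : ∀ g (j : ι) (i : Fin k) (h : (C j).scope ⊆ X i ∪ α i),
      restrictF (F g) (C j).scope = restrict h (combine (g i).1 (restrict (hαB i) b)) := by
    intro g j i h
    funext x
    obtain ⟨v, hv⟩ := x
    rcases Finset.mem_union.mp (h hv) with hx | hx
    · show F g v = _
      rw [hFX g v i hx]
      simp only [restrict, combine, dif_pos hx]
    · have hvB : v ∈ B := hαB i hx
      show F g v = _
      rw [hFB g v hvB]
      have hvX : v ∉ X i := fun hvX => hnotB hvX hvB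
      simp only [restrict, combine, dif_neg hvX]
  have keyB : ∀ g (j : ι) (h : (C j).scope ⊆ B),
      restrictF (F g) (C j).scope = restrict h b := by
    intro g j h
    funext x
    obtain ⟨v, hv⟩ := x
    show F g v = _
    rw [hFB g v (h hv)]; rfl
  let T : {f : V → A // IsSolution C f ∧ restrictF f B = b} → ∀ i, G i :=
      fun f i => ⟨restrictF f.1 (X i), by
        intro j h _
        have heq : restrict h (combine (restrictF f.1 (X i)) (restrict (hαB i) b))
            = restrictF f.1 (C j).scope := by
          funext x
          obtain ⟨v, hv⟩ := x
          rcases Finset.mem_union.mp (h hv) with hx | hx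
          · simp only [restrict, combine, dif_pos hx]; rfl
          · have hvB : v ∈ B := hαB i hx
            have hvX : v ∉ X i := fun hvX => hnotB hvX hvB
            simp only [restrict, combine, dif_neg hvX]
            exact (congrFun f.2.2 ⟨v, hvB⟩).symm
        rw [heq]
        exact f.2.1 j⟩
  have e : {f : V → A // IsSolution C f ∧ restrictF f B = b} ≃ ∀ i, G i :=
    { toFun := T
      invFun := fun g => ⟨F g, by
        intro j
        rcases hscope j with hsub | ⟨i, hsub⟩
        · rw [keyB g j hsub]; exact hb j hsub
        · rcases Finset.eq_empty_or_nonempty ((C j).scope ∩ X i) with hemp | hne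
          · have hsubB : (C j).scope ⊆ B := by
              intro v hv
              rcases Finset.mem_union.mp (hsub hv) with hx | hx
              · exact absurd (Finset.mem_inter.mpr ⟨hv, hx⟩) (by simp [hemp])
              · exact hαB i hx
            rw [keyB g j hsubB]; exact hb j hsubB
          · rw [key g j i hsub]
            exact (g i).2 j hsub hne, by
          funext x
          obtain ⟨v, hv⟩ := x
          exact hFB g v hv⟩
      left_inv := by
        intro f
        apply Subtype.ext
        funext v
        show F (T f) v = f.1 v
        by_cases hv : v ∈ B
        · exact (hFB (T f) v hv).trans (congrFun f.2.2 ⟨v, hv⟩).symm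
        · obtain ⟨i, hi⟩ := hmem v hv
          exact hFX (T f) v i hi
      right_inv := by
        intro g
        funext i
        apply Subtype.ext
        funext x
        obtain ⟨v, hv⟩ := x
        show F g v = (g i).1 ⟨v, hv⟩
        exact hFX g v i hv }
  rw [Nat.card_congr e, Nat.card_pi]
end

section
/- Let V = B ∪ X_1 ∪ ⋯ ∪ X_k be a partition of the variable set into pairwise disjoint sets, let α_1, …, α_k be subsets of B, and suppose every constraint scope e in C satisfies e ⊆ B or e ⊆ X_i ∪ α_i for some i. For each i and each function σ : α_i → A, let N_i(σ) be the number of functions g : X_i → A such that the combined function equal to g on X_i and to σ on α_i satisfies every constraint of C whose scope is contained in X_i ∪ α_i and meets X_i. Then the total number of solutions of C equals the sum, over all functions b : B → A that satisfy every constraint of C whose scope is contained in B, of the product N_1(b|α_1) · ⋯ · N_k(b|α_k). -/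
open scoped Classical

/-- with `V = B ∪ X₁ ∪ ⋯ ∪ X_k` a partition, `αᵢ ⊆ B`, and every scope
contained in `B` or in some `Xᵢ ∪ αᵢ`, the total number of solutions of `C` equals the
sum over all `b : B → A` satisfying all constraints with scope in `B` of `∏ᵢ Nᵢ(b|αᵢ)`. -/
theorem stmt6 {V A ι : Type} [Fintype V] [DecidableEq V] [Fintype A] [Fintype ι]
    (C : ι → Constraint V A) {k : ℕ}
    (B : Finset V) (X : Fin k → Finset V) (α : Fin k → Finset V)
    (hαB : ∀ i, α i ⊆ B)
    (hBX : ∀ i, Disjoint B (X i))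
    (hXX : ∀ i j, i ≠ j → Disjoint (X i) (X j))
    (hcover : B ∪ Finset.univ.biUnion X = Finset.univ)
    (hscope : ∀ j, (C j).scope ⊆ B ∨ ∃ i, (C j).scope ⊆ X i ∪ α i) :
    Nat.card {f : V → A // IsSolution C f} =
      ∑ b : {x // x ∈ B} → A,
        if SatisfiesOn C b then
          ∏ i : Fin k,
            Nat.card {g : {x // x ∈ X i} → A //
              ∀ j, ∀ h : (C j).scope ⊆ X i ∪ α i, ((C j).scope ∩ X i).Nonempty →
                restrict h (combine g (restrict (hαB i) b)) ∈ (C j).rel}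
        else 0 := by
  classical
  have hidx : ∀ (i i' : Fin k) (v : V), v ∈ X i → v ∈ X i' → i = i' := by
    intro i i' v h h'
    by_contra hne
    exact Finset.disjoint_left.mp (hXX i i' hne) h h'
  have hmem : ∀ v : V, v ∉ B → ∃ i, v ∈ X i := by
    intro v hv
    have hv2 : v ∈ B ∪ Finset.univ.biUnion X := by rw [hcover]; exact Finset.mem_univ v
    rcases Finset.mem_union.mp hv2 with h | h
    · exact absurd h hv
    · rcases Finset.mem_biUnion.mp h with ⟨i, _, hi⟩
      exact ⟨i, hi⟩
  let T : ({x // x ∈ B} → A) → Fin k → Type := fun b i =>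
    {g : {x // x ∈ X i} → A //
      ∀ j, ∀ h : (C j).scope ⊆ X i ∪ α i, ((C j).scope ∩ X i).Nonempty →
        restrict h (combine g (restrict (hαB i) b)) ∈ (C j).rel}
  let S := Σ b : {b : ({x // x ∈ B} → A) // SatisfiesOn C b}, ∀ i, T b.1 i
  have combine_eq : ∀ (f : V → A) (i : Fin k),
      combine (restrictF f (X i)) (restrict (hαB i) (restrictF f B)) =
        restrictF f (X i ∪ α i) := by
    intro f i
    funext x
    simp only [combine, restrict, restrictF]
    split <;> rfl
  let Φ : {f : V → A // IsSolution C f} → S := fun f =>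
    ⟨⟨restrictF f.1 B, fun j _ => f.2 j⟩,
     fun i => ⟨restrictF f.1 (X i), fun j hsub _ => by
       rw [combine_eq f.1 i]
       exact f.2 j⟩⟩
  have hinj : Function.Injective Φ := by
    intro f f' hff
    have hB : restrictF f.1 B = restrictF f'.1 B := congrArg (fun s : S => s.1.1) hff
    have hXc : ∀ i, restrictF f.1 (X i) = restrictF f'.1 (X i) := fun i =>
      congrArg (fun s : S => ((s.2 i).1 : {x // x ∈ X i} → A)) hff
    apply Subtype.ext
    funext v
    by_cases hv : v ∈ B
    · exact congrFun hB ⟨v, hv⟩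
    · obtain ⟨i, hi⟩ := hmem v hv
      exact congrFun (hXc i) ⟨v, hi⟩
  have hsurj : Function.Surjective Φ := by
    rintro ⟨⟨b, hb⟩, g⟩
    obtain ⟨F, hFB, hFX⟩ : ∃ F : V → A, (∀ (v : V) (hv : v ∈ B), F v = b ⟨v, hv⟩) ∧
        (∀ (i : Fin k) (v : V) (hv : v ∈ X i), F v = (g i).1 ⟨v, hv⟩) := by
      refine ⟨fun v =>
        if hv : v ∈ B then b ⟨v, hv⟩
        else (g (hmem v hv).choose).1 ⟨v, (hmem v hv).choose_spec⟩,
        fun v hv => dif_pos hv, ?_⟩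
      intro i v hv
      have hvB : v ∉ B := fun h => Finset.disjoint_left.mp (hBX i) h hv
      have h1 : (if hv : v ∈ B then b ⟨v, hv⟩
          else (g (hmem v hv).choose).1 ⟨v, (hmem v hv).choose_spec⟩) =
          (g (hmem v hvB).choose).1 ⟨v, (hmem v hvB).choose_spec⟩ := dif_neg hvB
      refine h1.trans ?_
      obtain rfl := hidx (hmem v hvB).choose i v (hmem v hvB).choose_spec hv
      rfl
    have hBcase : ∀ (j : ι) (hsub : (C j).scope ⊆ B), restrictF F (C j).scope ∈ (C j).rel := by
      intro j hsub
      have : restrictF F (C j).scope = restrict hsub b := funext fun x => hFB x.1 (hsub x.2)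
      rw [this]
      exact hb j hsub
    have hsol : IsSolution C F := by
      intro j
      rcases hscope j with hsub | ⟨i, hsub⟩
      · exact hBcase j hsub
      · by_cases hne : ((C j).scope ∩ X i).Nonempty
        · have hmemrel := (g i).2 j hsub hne
          have heq : restrictF F (C j).scope =
              restrict hsub (combine (g i).1 (restrict (hαB i) b)) := by
            funext x
            have hx : x.1 ∈ X i ∪ α i := hsub x.2
            show F x.1 = combine (g i).1 (restrict (hαB i) b) ⟨x.1, hx⟩
            by_cases hxi : x.1 ∈ X i
            · rw [hFX i x.1 hxi]
              simp only [combine, dif_pos hxi]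
            · have hxa : x.1 ∈ α i := by
                rcases Finset.mem_union.mp hx with h | h
                · exact absurd h hxi
                · exact h
              rw [hFB x.1 (hαB i hxa)]
              simp only [combine, dif_neg hxi, restrict]
          rw [heq]
          exact hmemrel
        · have hsubB : (C j).scope ⊆ B := by
            intro v hv
            rcases Finset.mem_union.mp (hsub hv) with h | h
            · exact absurd ⟨v, Finset.mem_inter.mpr ⟨hv, h⟩⟩ hne
            · exact hαB i h
          exact hBcase j hsubB
    refine ⟨⟨F, hsol⟩, ?_⟩
    have hbeq : b = restrictF F B := funext fun x => (hFB x.1 x.2).symm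
    subst hbeq
    refine Sigma.ext rfl (heq_of_eq ?_)
    funext i
    apply Subtype.ext
    funext x
    exact hFX i x.1 x.2
  have hcard : Nat.card {f : V → A // IsSolution C f} = Nat.card S :=
    Nat.card_congr (Equiv.ofBijective Φ ⟨hinj, hsurj⟩)
  rw [hcard]
  rw [Nat.card_eq_fintype_card, Fintype.card_sigma]
  have step : ∀ b : {b : ({x // x ∈ B} → A) // SatisfiesOn C b},
      Fintype.card (∀ i, T b.1 i) = ∏ i, Nat.card (T b.1 i) := by
    intro b
    rw [← Nat.card_eq_fintype_card, Nat.card_pi]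
  rw [Finset.sum_congr rfl fun b _ => step b]
  rw [← Finset.sum_filter]
  exact (Finset.sum_subtype (p := fun b : {x // x ∈ B} → A => SatisfiesOn C b)
    (Finset.univ.filter (fun b : {x // x ∈ B} → A => SatisfiesOn C b))
    (by intro x; simp) (fun b => ∏ i, Nat.card (T b i))).symm
end

section
/- Let V = X ∪ α ∪ Y be a partition of the variable set into three pairwise disjoint sets, and suppose every constraint scope e in C satisfies e ⊆ X ∪ α or e ⊆ α ∪ Y. Let μ and μ' be functions from α ∪ Y to A with μ|α = μ'|α, each satisfying every constraint of C whose scope is contained in α ∪ Y. Then the number of functions g : X → A such that the combined function equal to g on X and to μ on α ∪ Y is a solution of C equals the number of functions g : X → A such that the combined function equal to g on X and to μ' on α ∪ Y is a solution of C. -/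
open scoped Classical

/-- if `μ, μ' : α ∪ Y → A` both satisfy every constraint whose scope is
contained in `α ∪ Y` and agree on `α`, then the number of functions `g : X → A` whose
combination with `μ` is a solution equals the number of those whose combination with
`μ'` is a solution. -/
theorem stmt9 {V A ι : Type} [Fintype V] [DecidableEq V] [Fintype A] [Fintype ι]
    (C : ι → Constraint V A)
    (X α Y : Finset V)
    (hXα : Disjoint X α) (hXY : Disjoint X Y) (hαY : Disjoint α Y)
    (hcover : X ∪ α ∪ Y = Finset.univ)
    (hscope : ∀ i, (C i).scope ⊆ X ∪ α ∨ (C i).scope ⊆ α ∪ Y)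
    (μ μ' : {x // x ∈ α ∪ Y} → A)
    (hμ : SatisfiesOn C μ) (hμ' : SatisfiesOn C μ')
    (hagree : restrict Finset.subset_union_left μ = restrict Finset.subset_union_left μ') :
    Nat.card {g : {x // x ∈ X} → A //
        IsSolution C (fun x => if hx : x ∈ X then g ⟨x, hx⟩ else
          μ ⟨x, by
            have hxu : x ∈ X ∪ α ∪ Y := hcover ▸ Finset.mem_univ x
            simp only [Finset.mem_union] at hxu ⊢
            tauto⟩)} =
      Nat.card {g : {x // x ∈ X} → A //
        IsSolution C (fun x => if hx : x ∈ X then g ⟨x, hx⟩ else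
          μ' ⟨x, by
            have hxu : x ∈ X ∪ α ∪ Y := hcover ▸ Finset.mem_univ x
            simp only [Finset.mem_union] at hxu ⊢
            tauto⟩)} := by
  have key : ∀ g : {x // x ∈ X} → A,
      IsSolution C (fun x => if hx : x ∈ X then g ⟨x, hx⟩ else
          μ ⟨x, by
            have hxu : x ∈ X ∪ α ∪ Y := hcover ▸ Finset.mem_univ x
            simp only [Finset.mem_union] at hxu ⊢
            tauto⟩) ↔
      IsSolution C (fun x => if hx : x ∈ X then g ⟨x, hx⟩ else
          μ' ⟨x, by
            have hxu : x ∈ X ∪ α ∪ Y := hcover ▸ Finset.mem_univ x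
            simp only [Finset.mem_union] at hxu ⊢
            tauto⟩) := by
    intro g
    set f := (fun x => if hx : x ∈ X then g ⟨x, hx⟩ else
          μ ⟨x, by
            have hxu : x ∈ X ∪ α ∪ Y := hcover ▸ Finset.mem_univ x
            simp only [Finset.mem_union] at hxu ⊢
            tauto⟩) with hf
    set f' := (fun x => if hx : x ∈ X then g ⟨x, hx⟩ else
          μ' ⟨x, by
            have hxu : x ∈ X ∪ α ∪ Y := hcover ▸ Finset.mem_univ x
            simp only [Finset.mem_union] at hxu ⊢
            tauto⟩) with hf'
    have hμα : ∀ (x : V) (h1 : x ∈ α ∪ Y) (h2 : x ∈ α ∪ Y), x ∈ α →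
        μ ⟨x, h1⟩ = μ' ⟨x, h2⟩ := by
      intro x h1 h2 hxα
      have := congrFun hagree ⟨x, hxα⟩
      simpa [restrict] using this
    constructor
    · intro hsol i
      rcases hscope i with hs | hs
      · have : restrictF f' (C i).scope = restrictF f (C i).scope := by
          funext x
          have hx := hs x.2
          simp only [Finset.mem_union] at hx
          by_cases hxX : x.1 ∈ X
          · simp [restrictF, hf, hf', hxX]
          · have hxα : x.1 ∈ α := hx.resolve_left hxX
            simp only [restrictF, hf, hf', dif_neg hxX]
            exact (hμα x.1 _ _ hxα).symm
        rw [this]; exact hsol i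
      · have : restrictF f' (C i).scope = restrict hs μ' := by
          funext x
          have hx := hs x.2
          have hxX : x.1 ∉ X := by
            simp only [Finset.mem_union] at hx
            rcases hx with h | h
            · exact fun hh => hXα.forall_ne_finset hh h rfl
            · exact fun hh => hXY.forall_ne_finset hh h rfl
          simp [restrictF, restrict, hf', dif_neg hxX]
        rw [this]; exact hμ' i hs
    · intro hsol i
      rcases hscope i with hs | hs
      · have : restrictF f (C i).scope = restrictF f' (C i).scope := by
          funext x
          have hx := hs x.2
          simp only [Finset.mem_union] at hx
          by_cases hxX : x.1 ∈ X
          · simp [restrictF, hf, hf', hxX]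
          · have hxα : x.1 ∈ α := hx.resolve_left hxX
            simp only [restrictF, hf, hf', dif_neg hxX]
            exact hμα x.1 _ _ hxα
        rw [this]; exact hsol i
      · have : restrictF f (C i).scope = restrict hs μ := by
          funext x
          have hx := hs x.2
          have hxX : x.1 ∉ X := by
            simp only [Finset.mem_union] at hx
            rcases hx with h | h
            · exact fun hh => hXα.forall_ne_finset hh h rfl
            · exact fun hh => hXY.forall_ne_finset hh h rfl
          simp [restrictF, restrict, hf, dif_neg hxX]
        rw [this]; exact hμ i hs
  exact Nat.card_congr (Equiv.subtypeEquivRight key)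
end
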